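/- arXiv:1111.5920 — 6 statements merged into one kernel-verified Lean document; each statement's English description precedes it below -/
import Mathlib

section
/- Let φ be a lattice combination of literals in disjunctive normal form, given by a finite nonempty index type I, for each i : I a finite nonempty index type J i, variables v : (i : I) → J i → V, and signs s : (i : I) → J i → Bool. Then the following are equivalent: (1) φ is a classical propositional contradiction, i.e., for every b : V → Bool, it is not the case that there exists i such that for all j, the literal ℓ_{ij} is true (where ℓ_{ij} = b (v i j) if s i j = true and ℓ_{ij} = ¬ b (v i j) otherwise); (2) for every e : V → ℝ with 0 ≤ e p ≤ 1 for all p, the Łukasiewicz value of the star translation, namely max over i of (min over j of max 0 (2 * ℓ'_{ij} − 1)), equals 0, where ℓ'_{ij} = e (v i j) if s i j = true and ℓ'_{ij} = 1 − e (v i j) otherwise. -/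
/-- A DNF lattice combination of literals is a classical propositional contradiction
iff the Łukasiewicz value of its star translation is `0` under every `[0,1]`-evaluation. -/
theorem dnf_contradiction_iff_lukasiewicz_star_zero
    {V : Type*} {I : Type*} [Fintype I] [Nonempty I]
    {J : I → Type*} [∀ i, Fintype (J i)] [∀ i, Nonempty (J i)]
    (v : (i : I) → J i → V) (s : (i : I) → J i → Bool) :
    (∀ b : V → Bool, ¬ ∃ i : I, ∀ j : J i,
        (if s i j then b (v i j) else ! b (v i j)) = true) ↔
    (∀ e : V → ℝ, (∀ p, 0 ≤ e p ∧ e p ≤ 1) →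
      Finset.univ.sup' Finset.univ_nonempty (fun i : I =>
        Finset.univ.inf' Finset.univ_nonempty (fun j : J i =>
          max 0 (2 * (if s i j then e (v i j) else 1 - e (v i j)) - 1))) = 0) := by
  constructor
  · intro hcontra e he
    apply le_antisymm
    · rw [Finset.sup'_le_iff]
      intro i _
      -- find some j with literal value ≤ 1/2
      by_contra hpos
      push_neg at hpos
      have hlit : ∀ j : J i, (1 : ℝ) / 2 < (if s i j then e (v i j) else 1 - e (v i j)) := by
        intro j
        by_contra hle
        push_neg at hle
        have : Finset.univ.inf' Finset.univ_nonempty (fun j : J i =>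
            max 0 (2 * (if s i j then e (v i j) else 1 - e (v i j)) - 1)) ≤ 0 := by
          refine le_trans (Finset.inf'_le _ (Finset.mem_univ j)) ?_
          have h : 2 * (if s i j then e (v i j) else 1 - e (v i j)) - 1 ≤ 0 := by linarith
          exact max_le le_rfl h
        exact absurd this (not_le.mpr hpos)
      exact hcontra (fun p => decide ((1:ℝ)/2 < e p)) ⟨i, fun j => by
        have := hlit j
        by_cases hs : s i j <;> simp [hs] at this ⊢
        · exact this
        · linarith [this]⟩
    · refine Finset.le_sup'_of_le _ (Finset.mem_univ (Classical.arbitrary I)) ?_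
      rw [Finset.le_inf'_iff]
      intro j _
      exact le_max_left _ _
  · intro hval b ⟨i, hi⟩
    set e : V → ℝ := fun p => if b p then 1 else 0 with he
    have hrange : ∀ p, 0 ≤ e p ∧ e p ≤ 1 := by
      intro p; by_cases h : b p <;> simp [he, h]
    have h0 := hval e hrange
    have h1 : (1 : ℝ) ≤ Finset.univ.sup' Finset.univ_nonempty (fun i : I =>
        Finset.univ.inf' Finset.univ_nonempty (fun j : J i =>
          max 0 (2 * (if s i j then e (v i j) else 1 - e (v i j)) - 1))) := by
      refine Finset.le_sup'_of_le _ (Finset.mem_univ i) ?_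
      rw [Finset.le_inf'_iff]
      intro j _
      have := hi j
      by_cases hs : s i j <;> simp [hs] at this
      · simp only [hs, he, this, if_true]; norm_num
      · simp only [hs, he, this, if_false, Bool.false_eq_true]; norm_num
    linarith
end

section
/- Let φ be a lattice combination of literals in disjunctive normal form, given by a finite nonempty index type I, for each i : I a finite nonempty index type J i, variables v : (i : I) → J i → V, and signs s : (i : I) → J i → Bool. Then the following are equivalent: (1) φ is a classical propositional contradiction, i.e., for every b : V → Bool, it is not the case that there exists i such that for all j the literal ℓ_{ij} is true (where ℓ_{ij} = b (v i j) if s i j = true and ℓ_{ij} = ¬ b (v i j) otherwise); (2) for every e : V → ℝ with 0 ≤ e p ≤ 1 for all p, the Gödel value of the star translation, namely max over i of (min over j of ℓ'_{ij}), equals 0, where ℓ'_{ij} = e (v i j) if s i j = true and ℓ'_{ij} = (if e (v i j) = 0 then 1 else 0) otherwise. -/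
/-!
Since all literal values are nonnegative, a max of mins is `0` exactly when every conjunct
has a literal equal to `0`. A star literal under `e` is `0` exactly when the classical
literal is false under the valuation `p ↦ (e p ≠ 0)`, and every classical valuation arises
this way from its `{0, 1}`-valued indicator. So both sides say that every conjunct contains
a false literal under every valuation.
-/

open Finset

theorem sup'_inf'_eq_iff_forall_exists_eq {α : Type*} [LinearOrder α] {I : Type*} [Fintype I]
    [Nonempty I] {J : I → Type*} [∀ i, Fintype (J i)] [∀ i, Nonempty (J i)]
    {f : (i : I) → J i → α} {a : α} (hf : ∀ i j, a ≤ f i j) :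
    univ.sup' univ_nonempty (fun i => univ.inf' univ_nonempty (f i)) = a ↔
      ∀ i, ∃ j, f i j = a := by
  have hlower : a ≤ univ.sup' univ_nonempty (fun i => univ.inf' univ_nonempty (f i)) :=
    (Finset.le_inf' _ _ fun j _ => hf (Classical.arbitrary I) j).trans
      (Finset.le_sup' (fun i => univ.inf' univ_nonempty (f i)) (mem_univ _))
  rw [← hlower.ge_iff_eq', Finset.sup'_le_iff]
  simp only [Finset.inf'_le_iff, mem_univ, true_and, forall_const]
  exact forall_congr' fun i => exists_congr fun j => (hf i j).ge_iff_eq'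

def boolLiteral (s x : Bool) : Bool := if s then x else !x

noncomputable def godelStarLiteral (s : Bool) (x : ℝ) : ℝ :=
  if s then x else if x = 0 then 1 else 0

theorem godelStarLiteral_nonneg (s : Bool) {x : ℝ} (hx : 0 ≤ x) : 0 ≤ godelStarLiteral s x := by
  unfold godelStarLiteral
  split_ifs <;> norm_num [hx]

theorem godelStarLiteral_eq_zero_iff (s : Bool) (x : ℝ) :
    godelStarLiteral s x = 0 ↔ boolLiteral s (decide (x ≠ 0)) = false := by
  cases s <;> by_cases hx : x = 0 <;> simp [godelStarLiteral, boolLiteral, hx]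

theorem decide_ite_one_zero_ne_zero (b : Bool) :
    decide ((if b then (1 : ℝ) else 0) ≠ 0) = b := by
  cases b <;> simp

/-- A DNF lattice combination of literals is a classical propositional contradiction
iff the Gödel value of its star translation is `0` under every `[0,1]`-evaluation. -/
theorem dnf_contradiction_iff_godel_star_zero
    {V : Type*} {I : Type*} [Fintype I] [Nonempty I]
    {J : I → Type*} [∀ i, Fintype (J i)] [∀ i, Nonempty (J i)]
    (v : (i : I) → J i → V) (s : (i : I) → J i → Bool) :
    (∀ b : V → Bool, ¬ ∃ i : I, ∀ j : J i,
        (if s i j then b (v i j) else ! b (v i j)) = true) ↔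
    (∀ e : V → ℝ, (∀ p, 0 ≤ e p ∧ e p ≤ 1) →
      Finset.univ.sup' Finset.univ_nonempty (fun i : I =>
        Finset.univ.inf' Finset.univ_nonempty (fun j : J i =>
          if s i j then e (v i j) else (if e (v i j) = 0 then (1 : ℝ) else 0))) = 0) := by
  change (∀ b : V → Bool, ¬ ∃ i, ∀ j, boolLiteral (s i j) (b (v i j)) = true) ↔
    ∀ e : V → ℝ, (∀ p, 0 ≤ e p ∧ e p ≤ 1) →
      univ.sup' univ_nonempty (fun i => univ.inf' univ_nonempty
        (fun j => godelStarLiteral (s i j) (e (v i j)))) = 0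
  simp only [not_exists, not_forall, Bool.not_eq_true]
  constructor
  · intro hcontra e he
    rw [sup'_inf'_eq_iff_forall_exists_eq fun i j => godelStarLiteral_nonneg _ (he _).1]
    simpa only [godelStarLiteral_eq_zero_iff] using hcontra fun p => decide (e p ≠ 0)
  · intro hzero b
    have h01 : ∀ p, 0 ≤ (if b p then (1 : ℝ) else 0) ∧ (if b p then (1 : ℝ) else 0) ≤ 1 :=
      fun p => by split_ifs <;> norm_num
    have hb := hzero (fun p => if b p then 1 else 0) h01
    rw [sup'_inf'_eq_iff_forall_exists_eq fun i j => godelStarLiteral_nonneg _ (h01 _).1] at hb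
    simpa only [godelStarLiteral_eq_zero_iff, decide_ite_one_zero_ne_zero] using hb
end

section
/- Dual Herbrand Theorem: Let L be a first-order language possessing at least one closed term (e.g., a constant symbol), and let ψ be a quantifier-free formula of L with free variables among x₁, …, xₙ. Then the purely universal sentence ∀x₁ … ∀xₙ ψ(x₁, …, xₙ) is unsatisfiable (has no model, i.e., is a classical contradiction) if and only if there exist m ≥ 1 and closed terms t₁ⁱ, …, tₙⁱ for i = 1, …, m such that the sentence ⋀_{i=1}^m ψ(t₁ⁱ, …, tₙⁱ) is unsatisfiable. -/
/-!
If every finite family of ground instances of `ψ` has a model, compactness yields a model `N` of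
all ground instances at once. The substructure of `N` generated by `∅` consists of the values of
closed terms, so every assignment in it is a ground instance, and since `ψ` is quantifier-free its
truth is the same in the substructure and in `N`. For this model to be small in an arbitrary
universe, the argument is run in the countable sublanguage of the function symbols of `ψ` and `t₀`
and the resulting model is then expanded back to `L` arbitrarily.
-/

universe u v w

open FirstOrder

namespace FirstOrder.Language

variable {L : Language.{u, v}}

def Term.funSymbols {α : Type*} : L.Term α → Set (Σ l, L.Functions l)
  | var _ => ∅
  | func f ts => insert ⟨_, f⟩ (⋃ i, (ts i).funSymbols)

theorem Term.countable_funSymbols {α : Type*} : ∀ t : L.Term α, t.funSymbols.Countable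
  | var _ => Set.countable_empty
  | func _ ts => (Set.countable_iUnion fun i => (ts i).countable_funSymbols).insert _

def BoundedFormula.funSymbols {α : Type*} : ∀ {k}, L.BoundedFormula α k → Set (Σ l, L.Functions l)
  | _, falsum => ∅
  | _, equal t₁ t₂ => t₁.funSymbols ∪ t₂.funSymbols
  | _, rel _ ts => ⋃ i, (ts i).funSymbols
  | _, imp φ₁ φ₂ => φ₁.funSymbols ∪ φ₂.funSymbols
  | _, all φ => φ.funSymbols

theorem BoundedFormula.countable_funSymbols {α : Type*} :
    ∀ {k} (φ : L.BoundedFormula α k), φ.funSymbols.Countable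
  | _, falsum => Set.countable_empty
  | _, equal t₁ t₂ => t₁.countable_funSymbols.union t₂.countable_funSymbols
  | _, rel _ ts => Set.countable_iUnion fun i => (ts i).countable_funSymbols
  | _, imp φ₁ φ₂ => φ₁.countable_funSymbols.union φ₂.countable_funSymbols
  | _, all φ => φ.countable_funSymbols

section RestrictFunctions

variable (S : Set (Σ l, L.Functions l))

def restrictFunctions : Language.{u, v} where
  Functions l := {f : L.Functions l // ⟨l, f⟩ ∈ S}
  Relations := L.Relations

def restrictFunctionsIncl : L.restrictFunctions S →ᴸ L where
  onFunction _ f := f.1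
  onRelation _ R := R

theorem restrictFunctionsIncl_injective : (restrictFunctionsIncl S).Injective :=
  ⟨fun h => Subtype.val_injective h, fun h => h⟩

variable {S}

theorem countable_restrictFunctions_functions (hS : S.Countable) :
    Countable (Σ l, (L.restrictFunctions S).Functions l) := by
  have := hS.to_subtype
  refine Function.Injective.countable
    (f := fun f : Σ l, (L.restrictFunctions S).Functions l => (⟨⟨f.1, f.2.1⟩, f.2.2⟩ : S)) ?_
  rintro ⟨k, f, hf⟩ ⟨l, g, hg⟩ h
  obtain ⟨rfl, hfg⟩ := Sigma.mk.inj_iff.mp (congrArg Subtype.val h)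
  cases eq_of_heq hfg
  rfl

theorem Term.mem_range_onTerm_of_funSymbols_subset {α : Type*} :
    ∀ t : L.Term α, t.funSymbols ⊆ S → t ∈ Set.range (restrictFunctionsIncl S).onTerm
  | var a, _ => ⟨var a, rfl⟩
  | func f ts, h => by
    have hf : ⟨_, f⟩ ∈ S := h (Set.mem_insert _ _)
    choose ts' hts' using fun i => (ts i).mem_range_onTerm_of_funSymbols_subset
      ((Set.subset_iUnion _ i).trans ((Set.subset_insert _ _).trans h))
    exact ⟨func ⟨f, hf⟩ ts', congrArg (func f) (funext hts')⟩

theorem BoundedFormula.mem_range_onBoundedFormula_of_funSymbols_subset {α : Type*} :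
    ∀ {k} (φ : L.BoundedFormula α k), φ.funSymbols ⊆ S →
      φ ∈ Set.range (restrictFunctionsIncl S).onBoundedFormula
  | _, falsum, _ => ⟨falsum, rfl⟩
  | _, equal t₁ t₂, h => by
    obtain ⟨t₁', rfl⟩ := t₁.mem_range_onTerm_of_funSymbols_subset (Set.subset_union_left.trans h)
    obtain ⟨t₂', rfl⟩ := t₂.mem_range_onTerm_of_funSymbols_subset (Set.subset_union_right.trans h)
    exact ⟨equal t₁' t₂', rfl⟩
  | _, rel R ts, h => by
    choose ts' hts' using fun i =>
      (ts i).mem_range_onTerm_of_funSymbols_subset ((Set.subset_iUnion _ i).trans h)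
    exact ⟨rel (L := L.restrictFunctions S) R ts', congrArg (rel R) (funext hts')⟩
  | _, imp φ₁ φ₂, h => by
    obtain ⟨φ₁', rfl⟩ := φ₁.mem_range_onBoundedFormula_of_funSymbols_subset
      (Set.subset_union_left.trans h)
    obtain ⟨φ₂', rfl⟩ := φ₂.mem_range_onBoundedFormula_of_funSymbols_subset
      (Set.subset_union_right.trans h)
    exact ⟨φ₁'.imp φ₂', rfl⟩
  | _, all φ, h => by
    obtain ⟨φ', rfl⟩ := φ.mem_range_onBoundedFormula_of_funSymbols_subset h
    exact ⟨φ'.all, rfl⟩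

end RestrictFunctions

theorem LHom.isQF_of_isQF_onBoundedFormula {L' : Language} (ϕ : L →ᴸ L') {α : Type*} :
    ∀ {k} {φ : L.BoundedFormula α k}, (ϕ.onBoundedFormula φ).IsQF → φ.IsQF
  | _, .falsum, _ => BoundedFormula.isQF_bot
  | _, .equal _ _, _ => (BoundedFormula.IsAtomic.equal _ _).isQF
  | _, .rel _ _, _ => (BoundedFormula.IsAtomic.rel _ _).isQF
  | _, .imp _ _, h => by
    cases h with
    | of_isAtomic h => cases h
    | imp h₁ h₂ =>
      exact (ϕ.isQF_of_isQF_onBoundedFormula h₁).imp (ϕ.isQF_of_isQF_onBoundedFormula h₂)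
  | _, .all φ, h => absurd h (BoundedFormula.not_all_isQF _)

section Semantics

variable {M : Type*} [L.Structure M]

theorem Sentence.realize_iInf {β : Type*} [Finite β] (f : β → L.Sentence) :
    M ⊨ BoundedFormula.iInf f ↔ ∀ b, M ⊨ f b :=
  BoundedFormula.realize_iInf

theorem Sentence.realize_formula_subst {α : Type*} (ψ : L.Formula α) (u : α → L.Term Empty) :
    M ⊨ ψ.subst u ↔ ψ.Realize fun a => (u a).realize (default : Empty → M) :=
  BoundedFormula.realize_subst

theorem Sentence.realize_alls_relabel_sumInr {n : ℕ} (ψ : L.Formula (Fin n)) :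
    M ⊨ (BoundedFormula.relabel (Sum.inr : Fin n → Empty ⊕ Fin n) ψ).alls ↔
      ∀ v : Fin n → M, ψ.Realize v :=
  BoundedFormula.realize_alls.trans (forall_congr' fun _ => Formula.realize_relabel_sumInr ψ)

theorem Substructure.mem_closure_empty_iff_exists_term {x : M} :
    x ∈ Substructure.closure L (∅ : Set M) ↔ ∃ t : L.Term Empty, t.realize default = x := by
  rw [Substructure.mem_closure_iff_exists_term]
  constructor
  · rintro ⟨t, rfl⟩
    exact ⟨t.relabel isEmptyElim, by rw [Term.realize_relabel, Subsingleton.elim (_ ∘ _) (↑)]⟩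
  · rintro ⟨t, rfl⟩
    exact ⟨t.relabel isEmptyElim, by rw [Term.realize_relabel, Subsingleton.elim (_ ∘ _) default]⟩

theorem BoundedFormula.IsQF.realize_closure_empty {α : Type*} {ψ : L.Formula α} (hψ : ψ.IsQF)
    (h : ∀ u : α → L.Term Empty, ψ.Realize fun a => (u a).realize (default : Empty → M))
    (v : α → Substructure.closure L (∅ : Set M)) : ψ.Realize v := by
  choose u hu using fun a => Substructure.mem_closure_empty_iff_exists_term.mp (v a).2
  have hv : (Substructure.closure L ∅).subtype ∘ v = fun a => (u a).realize default :=
    funext fun a => (hu a).symm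
  rw [Formula.Realize, ← hψ.realize_embedding (Substructure.closure L ∅).subtype,
    Unique.eq_default (_ ∘ default), hv]
  exact h u

end Semantics

theorem exists_model_of_realize_closedTerms_of_countable [Countable (Σ l, L.Functions l)]
    [Nonempty (L.Term Empty)] {α : Type*} {ψ : L.Formula α} (hψ : ψ.IsQF)
    (N : Type*) [L.Structure N]
    (h : ∀ u : α → L.Term Empty, ψ.Realize fun a => (u a).realize (default : Empty → N)) :
    ∃ (M : Type w) (_ : L.Structure M) (_ : Nonempty M), ∀ v : α → M, ψ.Realize v := by
  set D := Substructure.closure L (∅ : Set N)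
  have : Countable D := Set.countable_empty.substructure_closure L
  have : Nonempty D :=
    let ⟨t⟩ := ‹Nonempty (L.Term Empty)›
    ⟨⟨_, Substructure.mem_closure_empty_iff_exists_term.mpr ⟨t, rfl⟩⟩⟩
  have hD : ∀ v : α → D, ψ.Realize v := hψ.realize_closure_empty h
  let e := (equivShrink.{w} D).inducedStructureEquiv (L := L)
  let _ := (equivShrink.{w} D).inducedStructure (L := L)
  refine ⟨Shrink.{w} D, inferInstance, e.symm.toEquiv.nonempty, fun v => ?_⟩
  rw [show v = e ∘ (e.symm ∘ v) from funext fun a => (e.apply_symm_apply (v a)).symm,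
    StrongHomClass.realize_formula]
  exact hD _

theorem exists_model_of_realize_closedTerms (t₀ : L.Term Empty) {α : Type*}
    {ψ : L.Formula α} (hψ : ψ.IsQF) (N : Type*) [L.Structure N]
    (h : ∀ u : α → L.Term Empty, ψ.Realize fun a => (u a).realize (default : Empty → N)) :
    ∃ (M : Type w) (_ : L.Structure M) (_ : Nonempty M), ∀ v : α → M, ψ.Realize v := by
  classical
  obtain ⟨S, hSψ, hSt₀, hS⟩ :
      ∃ S, BoundedFormula.funSymbols ψ ⊆ S ∧ t₀.funSymbols ⊆ S ∧ S.Countable :=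
    ⟨_, Set.subset_union_left, Set.subset_union_right,
      (BoundedFormula.countable_funSymbols ψ).union t₀.countable_funSymbols⟩
  have := countable_restrictFunctions_functions hS
  set ι := restrictFunctionsIncl S
  obtain ⟨ψ', hψ'⟩ := BoundedFormula.mem_range_onBoundedFormula_of_funSymbols_subset ψ hSψ
  obtain rfl : ι.onFormula ψ' = ψ := hψ'
  obtain ⟨t₀', -⟩ := t₀.mem_range_onTerm_of_funSymbols_subset hSt₀
  have : Nonempty ((L.restrictFunctions S).Term Empty) := ⟨t₀'⟩
  let _ := ι.reduct N
  obtain ⟨M, _, _, hM⟩ : ∃ (M : Type w) (_ : (L.restrictFunctions S).Structure M) (_ : Nonempty M),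
      ∀ v : α → M, Formula.Realize ψ' v :=
    exists_model_of_realize_closedTerms_of_countable (ι.isQF_of_isQF_onBoundedFormula hψ) N
      fun u => by
        simpa only [← ι.realize_onTerm, ← ι.realize_onFormula] using h fun a => ι.onTerm (u a)
  have : Inhabited M := Classical.inhabited_of_nonempty'
  let _ := ι.defaultExpansion M
  have := (restrictFunctionsIncl_injective S).isExpansionOn_default M
  exact ⟨M, inferInstance, inferInstance, fun v => (ι.realize_onFormula ψ').mpr (hM v)⟩

theorem isSatisfiable_range_subst (t₀ : L.Term Empty) {α : Type*} (ψ : L.Formula α)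
    (h : ∀ m : ℕ, 0 < m → ∀ t : Fin m → α → L.Term Empty,
      ∃ (M : Type w) (_ : L.Structure M) (_ : Nonempty M),
        ∀ i, ψ.Realize fun a => (t i a).realize (default : Empty → M)) :
    Theory.IsSatisfiable (Set.range fun u : α → L.Term Empty => ψ.subst u) := by
  refine Theory.isSatisfiable_iff_isFinitelySatisfiable.mpr fun T₀ hT₀ => ?_
  choose u hu using fun φ : T₀ => Set.mem_range.mp (hT₀ φ.2)
  obtain ⟨M, _, _, hM⟩ := h (T₀.card + 1) T₀.card.succ_pos
    (Fin.cons (fun _ => t₀) fun i => u (T₀.equivFin.symm i))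
  have : M ⊨ (T₀ : L.Theory) := ⟨fun φ hφ => by
    have := hM (T₀.equivFin ⟨φ, hφ⟩).succ
    rwa [Fin.cons_succ, _root_.Equiv.symm_apply_apply, ← Sentence.realize_formula_subst, hu]
      at this⟩
  exact Theory.Model.isSatisfiable M

end FirstOrder.Language

open FirstOrder.Language

/-- **Dual Herbrand Theorem.** In a language with at least one closed term, a purely
universal sentence `∀ x₁ … ∀ xₙ ψ(x₁, …, xₙ)` (with `ψ` quantifier-free) is a classical
contradiction (has no nonempty model) iff there exist `m ≥ 1` and closed terms
`tⱼⁱ` (`i = 1, …, m`) such that the conjunction `⋀ᵢ ψ(t₁ⁱ, …, tₙⁱ)` is a contradiction. -/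
theorem dual_herbrand {L : FirstOrder.Language.{u, v}} (t₀ : L.Term Empty) (n : ℕ)
    (ψ : L.Formula (Fin n)) (hqf : ψ.IsQF) :
    (¬ ∃ (M : Type w) (_ : L.Structure M) (_ : Nonempty M),
        Language.Sentence.Realize M
          (Language.BoundedFormula.alls
            (Language.BoundedFormula.relabel (Sum.inr : Fin n → Empty ⊕ Fin n) ψ))) ↔
    (∃ m : ℕ, 0 < m ∧ ∃ t : Fin m → Fin n → L.Term Empty,
      ¬ ∃ (M : Type w) (_ : L.Structure M) (_ : Nonempty M),
        Language.Sentence.Realize M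
          (Language.BoundedFormula.iInf (fun i : Fin m => ψ.subst (t i)))) := by
  simp only [Sentence.realize_alls_relabel_sumInr, Sentence.realize_iInf,
    Sentence.realize_formula_subst]
  constructor
  · intro hunsat
    by_contra! hsat
    obtain ⟨N⟩ := isSatisfiable_range_subst t₀ ψ hsat
    exact hunsat (exists_model_of_realize_closedTerms t₀ hqf N fun u =>
      (Sentence.realize_formula_subst ψ u).mp (N.is_model.realize_of_mem _ ⟨u, rfl⟩))
  · rintro ⟨m, -, t, hunsat⟩ ⟨M, _, _, hM⟩
    exact hunsat ⟨M, inferInstance, inferInstance, fun i => hM _⟩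
end

section
/- There exist a nonempty type D and a function P : D → ℝ with 0 ≤ P x ≤ 1 for all x, such that (⨆ x, (1 - |2 * P x - 1|)) = 1 and (⨅ x, ⨆ y, (1 - |P x - max 0 (2 * P y - 1)|)) = 1. (In other words, Hájek's sentence Φ := ∃x (P(x) ↔ ¬P(x)) & ∀x ∃y (P(x) ↔ P(y) & P(y)) is 1-satisfiable in a structure over the standard MV-chain; a witness is D = [0,1] with P the identity.) -/
lemma hajek_aux_bdd (x : Set.Icc (0:ℝ) 1) :
    BddAbove (Set.range fun y : Set.Icc (0:ℝ) 1 =>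
      (1 - |(x:ℝ) - max 0 (2 * (y:ℝ) - 1)|)) := by
  refine ⟨1, ?_⟩
  rintro _ ⟨y, rfl⟩
  have := abs_nonneg ((x:ℝ) - max 0 (2 * (y:ℝ) - 1))
  simp only
  linarith

lemma hajek_aux (x : Set.Icc (0:ℝ) 1) :
    (⨆ y : Set.Icc (0:ℝ) 1, (1 - |(x:ℝ) - max 0 (2 * (y:ℝ) - 1)|)) = 1 := by
  apply le_antisymm
  · exact ciSup_le fun y => by
      have := abs_nonneg ((x:ℝ) - max 0 (2 * (y:ℝ) - 1)); linarith
  · have hy : ((x:ℝ) + 1) / 2 ∈ Set.Icc (0:ℝ) 1 := by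
      constructor <;> [nlinarith [x.2.1]; nlinarith [x.2.2]]
    have h := le_ciSup (hajek_aux_bdd x) (⟨((x:ℝ) + 1) / 2, hy⟩ : Set.Icc (0:ℝ) 1)
    have hmax : max 0 (2 * (((x:ℝ) + 1) / 2) - 1) = (x:ℝ) := by
      rw [max_eq_right] <;> [ring; nlinarith [x.2.1]]
    simp only [hmax] at h
    simpa using h

/-- Hájek's sentence `Φ := ∃x (P(x) ↔ ¬P(x)) & ∀x ∃y (P(x) ↔ P(y) & P(y))` is
`1`-satisfiable in a structure over the standard MV-chain. -/
theorem hajek_sentence_std_mv_sat :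
    ∃ (D : Type) (_ : Nonempty D) (P : D → ℝ),
      (∀ x, 0 ≤ P x ∧ P x ≤ 1) ∧
      (⨆ x, (1 - |2 * P x - 1|)) = 1 ∧
      (⨅ x, ⨆ y, (1 - |P x - max 0 (2 * P y - 1)|)) = 1 := by
  refine ⟨Set.Icc (0:ℝ) 1, ⟨⟨0, by norm_num, by norm_num⟩⟩, fun x => (x : ℝ),
    fun x => ⟨x.2.1, x.2.2⟩, ?_, ?_⟩
  · apply le_antisymm
    · exact ciSup_le fun x => by
        have := abs_nonneg (2 * (x:ℝ) - 1); linarith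
    · have hb : BddAbove (Set.range fun x : Set.Icc (0:ℝ) 1 => (1 - |2 * (x:ℝ) - 1|)) := by
        refine ⟨1, ?_⟩
        rintro _ ⟨x, rfl⟩
        have := abs_nonneg (2 * (x:ℝ) - 1)
        simp only
        linarith
      have h := le_ciSup hb (⟨1/2, by norm_num, by norm_num⟩ : Set.Icc (0:ℝ) 1)
      simpa using h
  · have : (⨅ x : Set.Icc (0:ℝ) 1, ⨆ y : Set.Icc (0:ℝ) 1,
        (1 - |(x:ℝ) - max 0 (2 * (y:ℝ) - 1)|)) = ⨅ _ : Set.Icc (0:ℝ) 1, (1:ℝ) :=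
      iInf_congr hajek_aux
    rw [show (⨅ x : Set.Icc (0:ℝ) 1, ⨆ y : Set.Icc (0:ℝ) 1,
        (1 - |(x:ℝ) - max 0 (2 * (y:ℝ) - 1)|)) = _ from this, ciInf_const]
end

section
/- For every natural number n ≥ 1, there do not exist a nonempty type D and a function P : D → ℝ such that every value P x lies in the finite set {k/n : k ∈ ℕ, k ≤ n} and both (⨆ x, (1 - |2 * P x - 1|)) = 1 and (⨅ x, ⨆ y, (1 - |P x - max 0 (2 * P y - 1)|)) = 1. (In other words, Hájek's sentence Φ := ∃x (P(x) ↔ ¬P(x)) & ∀x ∃y (P(x) ↔ P(y) & P(y)) is not 1-satisfiable in any structure over a finite MV-chain; this settles the second open problem of Montagna–Noguera negatively.) -/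
/-!
Over a finite chain every supremum and infimum is attained, so `1`-satisfaction of `Φ`
yields an element with `P x = 1/2` and, for every `x` with `P x > 0`, an element `y` with
`2 P y - 1 = P x`, i.e. `P y = (P x + 1) / 2`. Then the largest value of `P` in `(0, 1)`,
which exists because there is one (`1/2`) and the chain is finite, is exceeded by another
value in `(0, 1)`.
-/

open Set

theorem exists_eq_ciSup_of_finite_range {α ι : Type*} [ConditionallyCompleteLinearOrder α]
    [Nonempty ι] {f : ι → α} (hf : (range f).Finite) : ∃ i, f i = ⨆ i, f i :=
  (range_nonempty f).csSup_mem hf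

theorem Set.Finite.range_comp {α β ι : Type*} {f : ι → α} (hf : (range f).Finite) (g : α → β) :
    (range fun i => g (f i)).Finite :=
  (Set.range_comp g f).symm ▸ hf.image g

theorem Set.infinite_of_forall_mem_Ioo_add_one_div_two_mem {S : Set ℝ} {t₀ : ℝ} (ht₀ : t₀ ∈ S)
    (ht₀' : t₀ ∈ Ioo 0 1) (hS : ∀ t ∈ S, t ∈ Ioo 0 1 → (t + 1) / 2 ∈ S) : S.Infinite := by
  intro hfin
  obtain ⟨t, ⟨htS, ht⟩, hmax⟩ :=
    exists_max_image (S ∩ Ioo 0 1) id (hfin.subset inter_subset_left) ⟨t₀, ht₀, ht₀'⟩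
  have hnext : (t + 1) / 2 ∈ S ∩ Ioo 0 1 :=
    ⟨hS t htS ht, by linarith [ht.1, ht.2], by linarith [ht.2]⟩
  have hle : (t + 1) / 2 ≤ t := hmax _ hnext
  linarith [ht.2]

theorem finite_range_of_forall_eq_nat_div {D : Type*} {P : D → ℝ} {n : ℕ}
    (hP : ∀ x, ∃ k : ℕ, k ≤ n ∧ P x = (k : ℝ) / n) : (range P).Finite := by
  refine ((finite_Iic n).image fun k : ℕ => (k : ℝ) / n).subset ?_
  rintro _ ⟨x, rfl⟩
  obtain ⟨k, hk, hx⟩ := hP x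
  exact ⟨k, hk, hx.symm⟩

section Hajek

variable {D : Type*} [Nonempty D] {P : D → ℝ}

theorem exists_eq_half_of_iSup_eq_one (hP : (range P).Finite)
    (h : (⨆ x, (1 - |2 * P x - 1|)) = 1) : ∃ x, P x = 1 / 2 := by
  obtain ⟨x, hx⟩ := exists_eq_ciSup_of_finite_range (hP.range_comp fun t => 1 - |2 * t - 1|)
  refine ⟨x, ?_⟩
  have : 2 * P x - 1 = 0 := abs_nonpos_iff.mp (by linarith)
  linarith

theorem exists_eq_add_one_div_two_of_iInf_iSup_eq_one (hP : (range P).Finite)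
    (h : (⨅ x, ⨆ y, (1 - |P x - max 0 (2 * P y - 1)|)) = 1) (x : D) (hx : 0 < P x) :
    ∃ y, P y = (P x + 1) / 2 := by
  have hinf : 1 ≤ ⨆ y, (1 - |P x - max 0 (2 * P y - 1)|) :=
    h.ge.trans <|
      ciInf_le (hP.range_comp fun t => ⨆ y, (1 - |t - max 0 (2 * P y - 1)|)).bddBelow x
  obtain ⟨y, hy⟩ :=
    exists_eq_ciSup_of_finite_range (hP.range_comp fun t => 1 - |P x - max 0 (2 * t - 1)|)
  have hxy : P x - max 0 (2 * P y - 1) = 0 := abs_nonpos_iff.mp (by linarith)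
  refine ⟨y, ?_⟩
  rcases max_cases 0 (2 * P y - 1) with ⟨h0, -⟩ | ⟨h0, -⟩ <;> linarith

end Hajek

theorem hajek_sentence_finite_mv_unsat_general (n : ℕ) :
    ¬ ∃ (D : Type) (_ : Nonempty D) (P : D → ℝ),
      (∀ x, ∃ k : ℕ, k ≤ n ∧ P x = (k : ℝ) / n) ∧
      (⨆ x, (1 - |2 * P x - 1|)) = 1 ∧
      (⨅ x, ⨆ y, (1 - |P x - max 0 (2 * P y - 1)|)) = 1 := by
  rintro ⟨D, _, P, hP, hhalf, hstep⟩
  have hfin := finite_range_of_forall_eq_nat_div hP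
  obtain ⟨x₀, hx₀⟩ := exists_eq_half_of_iSup_eq_one hfin hhalf
  refine infinite_of_forall_mem_Ioo_add_one_div_two_mem (mem_range_self x₀)
    (by norm_num [hx₀]) ?_ hfin
  rintro _ ⟨x, rfl⟩ hx
  exact exists_eq_add_one_div_two_of_iInf_iSup_eq_one hfin hstep x hx.1

/-- Hájek's sentence `Φ := ∃x (P(x) ↔ ¬P(x)) & ∀x ∃y (P(x) ↔ P(y) & P(y))` is not
`1`-satisfiable in any structure over a finite MV-chain (with `n + 1` elements,
`n ≥ 1`). -/
theorem hajek_sentence_finite_mv_unsat (n : ℕ) (hn : 1 ≤ n) :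
    ¬ ∃ (D : Type) (_ : Nonempty D) (P : D → ℝ),
      (∀ x, ∃ k : ℕ, k ≤ n ∧ P x = (k : ℝ) / n) ∧
      (⨆ x, (1 - |2 * P x - 1|)) = 1 ∧
      (⨅ x, ⨆ y, (1 - |P x - max 0 (2 * P y - 1)|)) = 1 :=
  hajek_sentence_finite_mv_unsat_general n
end

section
/- Let S ⊆ ℝ be a set such that 1/2 ∈ S and for every x ∈ S there exists y ∈ S with x = max 0 (2*y - 1). Then S is infinite. -/
/-- Combinatorial core of the failure of Hájek's sentence over finite MV-chains:
if `1/2 ∈ S` and every `x ∈ S` is of the form `max 0 (2y - 1)` for some `y ∈ S`,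
then `S` is infinite. -/
theorem set_closed_under_halving_infinite (S : Set ℝ)
    (h1 : (1 / 2 : ℝ) ∈ S)
    (h2 : ∀ x ∈ S, ∃ y ∈ S, x = max 0 (2 * y - 1)) :
    S.Infinite := by
  have key : ∀ x, x ∈ S ∧ 1/2 ≤ x ∧ x < 1 →
      (x+1)/2 ∈ S ∧ 1/2 ≤ (x+1)/2 ∧ (x+1)/2 < 1 := by
    intro x ⟨hx, hle, hlt⟩
    obtain ⟨y, hyS, hxy⟩ := h2 x hx
    have hy : y = (x+1)/2 := by
      rcases max_choice 0 (2*y-1) with h | h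
      · rw [h] at hxy; linarith
      · rw [h] at hxy; linarith
    refine ⟨hy ▸ hyS, by linarith, by linarith⟩
  let T := {x : ℝ // x ∈ S ∧ 1/2 ≤ x ∧ x < 1}
  let g : T → T := fun x => ⟨(x.val + 1)/2, key x.val x.property⟩
  let x0 : T := ⟨1/2, h1, le_refl _, by norm_num⟩
  let f : ℕ → ℝ := fun n => (g^[n] x0).val
  have hmono : StrictMono f := by
    apply strictMono_nat_of_lt_succ
    intro n
    show ((g^[n] x0)).val < (g^[n+1] x0).val
    rw [Function.iterate_succ_apply']
    have := (g^[n] x0).property.2.2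
    show (g^[n] x0).val < ((g^[n] x0).val + 1)/2
    linarith
  apply Set.infinite_of_injective_forall_mem (f := f) hmono.injective
  intro n
  exact (g^[n] x0).property.1
end
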